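/- arXiv:1705.06417 — 2 statements merged into one kernel-verified Lean document; each statement's English description precedes it below -/
import Mathlib

section
/- There exists a constant C₁ > 0 such that for all ν ∈ (0,1], all k = (k₁,k₂,k₃) ∈ ℤ³ with k₃ ≠ 0, and all j ∈ {1,2,3}, one has |M̂ⱼ^ν(k)| ≤ C₁ |k|. (Consequently the sup over ν ∈ (0,1] and over all such k of |M̂ⱼ^ν(k)|/|k| is bounded by C₁.) -/
/-- Euclidean norm of a lattice point `k = (k₁, k₂, k₃) ∈ ℤ³`. -/
noncomputable def knorm (k : ℤ × ℤ × ℤ) : ℝ :=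
  Real.sqrt (((k.1 : ℝ)) ^ 2 + ((k.2.1 : ℝ)) ^ 2 + ((k.2.2 : ℝ)) ^ 2)

/-- Denominator `D_ν(k) = |k|²k₃² + (k₂² + ν|k|⁴)²`. -/
noncomputable def Dnu (ν : ℝ) (k : ℤ × ℤ × ℤ) : ℝ :=
  (knorm k) ^ 2 * ((k.2.2 : ℝ)) ^ 2 + (((k.2.1 : ℝ)) ^ 2 + ν * (knorm k) ^ 4) ^ 2

/-- First component of the magnetogeostrophic symbol. -/
noncomputable def Mhat1 (ν : ℝ) (k : ℤ × ℤ × ℤ) : ℝ :=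
  ((k.2.1 : ℝ) * (k.2.2 : ℝ) * (knorm k) ^ 2
    - (k.1 : ℝ) * (k.2.2 : ℝ) * (((k.2.1 : ℝ)) ^ 2 + ν * (knorm k) ^ 4)) / Dnu ν k

/-- Second component of the magnetogeostrophic symbol. -/
noncomputable def Mhat2 (ν : ℝ) (k : ℤ × ℤ × ℤ) : ℝ :=
  (-(k.1 : ℝ) * (k.2.2 : ℝ) * (knorm k) ^ 2
    - (k.2.1 : ℝ) * (k.2.2 : ℝ) * (((k.2.1 : ℝ)) ^ 2 + ν * (knorm k) ^ 4)) / Dnu ν k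

/-- Third component of the magnetogeostrophic symbol. -/
noncomputable def Mhat3 (ν : ℝ) (k : ℤ × ℤ × ℤ) : ℝ :=
  (((k.1 : ℝ) ^ 2 + (k.2.1 : ℝ) ^ 2) * (((k.2.1 : ℝ)) ^ 2 + ν * (knorm k) ^ 4)) / Dnu ν k

/-!
Write `n = |k|`, `z = k₃` and `B = k₂² + ν|k|⁴ ≥ 0`, so that `D_ν(k) = n²z² + B²`. Two lower bounds
on the denominator control every term of the numerators: `D ≥ n²z²`, and `D ≥ 2n|z|B` by AM-GM.
Since `k₃` is a nonzero integer, `|z| ≥ 1` and hence `n ≥ 1`; the terms carrying `n²` are then at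
most `n`, those carrying `B` at most `1/2` (or `n/2` for the third component).
-/

section Denominator

variable {p q s n z B : ℝ}

theorem abs_mul_mul_sq_div_le (hp : |p| ≤ n) (hz : 1 ≤ |z|) :
    |p * z * n ^ 2 / (n ^ 2 * z ^ 2 + B ^ 2)| ≤ n := by
  have hn : 0 ≤ n := (abs_nonneg p).trans hp
  have hzz : |z| ≤ z ^ 2 := by nlinarith [sq_abs z]
  rw [abs_div, abs_of_nonneg (by positivity : 0 ≤ n ^ 2 * z ^ 2 + B ^ 2), abs_mul, abs_mul,
    abs_of_nonneg (sq_nonneg n)]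
  refine div_le_of_le_mul₀ (by positivity) hn ?_
  calc |p| * |z| * n ^ 2 ≤ n * z ^ 2 * n ^ 2 := by gcongr
    _ ≤ n * (n ^ 2 * z ^ 2 + B ^ 2) := by nlinarith [sq_nonneg B]

theorem two_mul_mul_abs_mul_le (n z B : ℝ) : 2 * (n * |z| * B) ≤ n ^ 2 * z ^ 2 + B ^ 2 := by
  have amgm := two_mul_le_add_sq (n * |z|) B
  rw [mul_pow, sq_abs] at amgm
  linarith

theorem abs_mul_mul_div_le_half (hq : |q| ≤ n) (hB : 0 ≤ B) :
    |q * z * B / (n ^ 2 * z ^ 2 + B ^ 2)| ≤ 1 / 2 := by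
  rw [abs_div, abs_of_nonneg (by positivity : 0 ≤ n ^ 2 * z ^ 2 + B ^ 2), abs_mul, abs_mul,
    abs_of_nonneg hB]
  refine div_le_of_le_mul₀ (by positivity) (by norm_num) ?_
  calc |q| * |z| * B ≤ n * |z| * B := by gcongr
    _ ≤ 1 / 2 * (n ^ 2 * z ^ 2 + B ^ 2) := by linarith [two_mul_mul_abs_mul_le n z B]

theorem abs_sub_div_le (hp : |p| ≤ n) (hq : |q| ≤ n) (hz : 1 ≤ |z|) (hB : 0 ≤ B) :
    |(p * z * n ^ 2 - q * z * B) / (n ^ 2 * z ^ 2 + B ^ 2)| ≤ n + 1 / 2 := by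
  rw [sub_div]
  exact (abs_sub _ _).trans
    (add_le_add (abs_mul_mul_sq_div_le hp hz) (abs_mul_mul_div_le_half hq hB))

theorem abs_mul_div_le_half_mul (hs₀ : 0 ≤ s) (hs : s ≤ n ^ 2) (hn : 0 ≤ n) (hz : 1 ≤ |z|)
    (hB : 0 ≤ B) : |s * B / (n ^ 2 * z ^ 2 + B ^ 2)| ≤ n / 2 := by
  rw [abs_of_nonneg (by positivity)]
  refine div_le_of_le_mul₀ (by positivity) (by positivity) ?_
  calc s * B ≤ n ^ 2 * B := by gcongr
    _ ≤ n ^ 2 * B * |z| := le_mul_of_one_le_right (by positivity) hz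
    _ = n / 2 * (2 * (n * |z| * B)) := by ring
    _ ≤ n / 2 * (n ^ 2 * z ^ 2 + B ^ 2) := by gcongr; exact two_mul_mul_abs_mul_le n z B

end Denominator

section LatticeNorm

variable (k : ℤ × ℤ × ℤ)

theorem knorm_sq : knorm k ^ 2 = (k.1 : ℝ) ^ 2 + (k.2.1 : ℝ) ^ 2 + (k.2.2 : ℝ) ^ 2 :=
  Real.sq_sqrt (by positivity)

theorem sq_fst_add_sq_snd_fst_le_knorm_sq : (k.1 : ℝ) ^ 2 + (k.2.1 : ℝ) ^ 2 ≤ knorm k ^ 2 := by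
  rw [knorm_sq]
  linarith [sq_nonneg (k.2.2 : ℝ)]

theorem abs_fst_le_knorm : |(k.1 : ℝ)| ≤ knorm k :=
  Real.abs_le_sqrt (by nlinarith [sq_nonneg (k.2.1 : ℝ), sq_nonneg (k.2.2 : ℝ)])

theorem abs_snd_fst_le_knorm : |(k.2.1 : ℝ)| ≤ knorm k :=
  Real.abs_le_sqrt (by nlinarith [sq_nonneg (k.1 : ℝ), sq_nonneg (k.2.2 : ℝ)])

theorem abs_snd_snd_le_knorm : |(k.2.2 : ℝ)| ≤ knorm k :=
  Real.abs_le_sqrt (by nlinarith [sq_nonneg (k.1 : ℝ), sq_nonneg (k.2.1 : ℝ)])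

end LatticeNorm

theorem one_le_abs_intCast {m : ℤ} (hm : m ≠ 0) : 1 ≤ |(m : ℝ)| := by
  exact_mod_cast Int.one_le_abs hm

theorem stmt0 :
    ∃ C₁ : ℝ, 0 < C₁ ∧ ∀ ν ∈ Set.Ioc (0 : ℝ) 1, ∀ k : ℤ × ℤ × ℤ, k.2.2 ≠ 0 →
      |Mhat1 ν k| ≤ C₁ * knorm k ∧ |Mhat2 ν k| ≤ C₁ * knorm k ∧
        |Mhat3 ν k| ≤ C₁ * knorm k := by
  refine ⟨3 / 2, by norm_num, ?_⟩
  rintro ν ⟨hν, -⟩ k hk₃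
  have hz := one_le_abs_intCast hk₃
  have hn : 1 ≤ knorm k := hz.trans (abs_snd_snd_le_knorm k)
  have hB : 0 ≤ (k.2.1 : ℝ) ^ 2 + ν * knorm k ^ 4 := by positivity
  have hneg_fst : |-(k.1 : ℝ)| ≤ knorm k := (abs_neg _).trans_le (abs_fst_le_knorm k)
  refine ⟨?_, ?_, ?_⟩
  · calc |Mhat1 ν k| ≤ knorm k + 1 / 2 :=
          abs_sub_div_le (abs_snd_fst_le_knorm k) (abs_fst_le_knorm k) hz hB
      _ ≤ 3 / 2 * knorm k := by linarith
  · calc |Mhat2 ν k| ≤ knorm k + 1 / 2 := abs_sub_div_le hneg_fst (abs_snd_fst_le_knorm k) hz hB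
      _ ≤ 3 / 2 * knorm k := by linarith
  · calc |Mhat3 ν k| ≤ knorm k / 2 :=
          abs_mul_div_le_half_mul (by positivity) (sq_fst_add_sq_snd_fst_le_knorm_sq k)
            (by linarith) hz hB
      _ ≤ 3 / 2 * knorm k := by linarith
end

section
/- Let a : ℤ³ → ℂ be a square-summable family (∑_{k ∈ ℤ³} |a(k)|² < ∞) with a(k) = 0 whenever k₃ = 0. Then lim_{ν → 0⁺} ∑_{k ∈ ℤ³, k ≠ 0} ( ∑_{j=1}^{3} |M̂ⱼ^ν(k) − M̂ⱼ⁰(k)|² ) |a(k)|² / |k|² = 0. -/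
/-!
Dominated convergence for series. For `k₃ ≠ 0` the denominator `D_ν(k)` is positive for every
real `ν`, so each `M̂ⱼ^ν(k)` is continuous in `ν`. Writing `P = k₂² + ν|k|⁴`, the AM-GM bound
`|k| |k₃| |P| ≤ D_ν(k)` and `|k₃| |k|² ≤ D_ν(k)` give `|M̂ⱼ^ν(k)| ≤ 2|k|` uniformly in `ν`, so the
summands are dominated by `48 |a(k)|²`. For `k₃ = 0` the summand vanishes since `a(k) = 0`.
-/

open Filter Topology

lemma abs_mul_sub_mul_le {u v A B r D : ℝ} (hu : |u| ≤ r) (hv : |v| ≤ r) (hA : |A| ≤ D)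
    (hB : |B| ≤ D) : |u * A - v * B| ≤ 2 * r * D := by
  have hr : 0 ≤ r := (abs_nonneg u).trans hu
  calc |u * A - v * B| ≤ |u| * |A| + |v| * |B| := by
        rw [← abs_mul, ← abs_mul]; exact abs_sub _ _
    _ ≤ r * D + r * D := by gcongr
    _ = 2 * r * D := by ring

lemma abs_div_le_of_abs_le_mul {N D c : ℝ} (hD : 0 < D) (h : |N| ≤ c * D) : |N / D| ≤ c := by
  rwa [abs_div, abs_of_pos hD, div_le_iff₀ hD]

lemma sq_sub_le_of_abs_le {a b c : ℝ} (ha : |a| ≤ c) (hb : |b| ≤ c) : (a - b) ^ 2 ≤ 4 * c ^ 2 := by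
  calc (a - b) ^ 2 = |a - b| ^ 2 := (sq_abs _).symm
    _ ≤ (c + c) ^ 2 := by gcongr; exact (abs_sub _ _).trans (add_le_add ha hb)
    _ = 4 * c ^ 2 := by ring

namespace Magnetogeostrophic

variable (ν : ℝ) {k : ℤ × ℤ × ℤ}

lemma knorm_sq (k : ℤ × ℤ × ℤ) :
    knorm k ^ 2 = (k.1 : ℝ) ^ 2 + (k.2.1 : ℝ) ^ 2 + (k.2.2 : ℝ) ^ 2 :=
  Real.sq_sqrt (by positivity)

lemma knorm_nonneg (k : ℤ × ℤ × ℤ) : 0 ≤ knorm k := Real.sqrt_nonneg _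

lemma abs_fst_le_knorm (k : ℤ × ℤ × ℤ) : |(k.1 : ℝ)| ≤ knorm k :=
  Real.abs_le_sqrt (by nlinarith [sq_nonneg (k.2.1 : ℝ), sq_nonneg (k.2.2 : ℝ)])

lemma abs_snd_fst_le_knorm (k : ℤ × ℤ × ℤ) : |(k.2.1 : ℝ)| ≤ knorm k :=
  Real.abs_le_sqrt (by nlinarith [sq_nonneg (k.1 : ℝ), sq_nonneg (k.2.2 : ℝ)])

lemma abs_snd_snd_le_knorm (k : ℤ × ℤ × ℤ) : |(k.2.2 : ℝ)| ≤ knorm k :=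
  Real.abs_le_sqrt (by nlinarith [sq_nonneg (k.1 : ℝ), sq_nonneg (k.2.1 : ℝ)])

lemma one_le_abs_snd_snd (hk : k.2.2 ≠ 0) : 1 ≤ |(k.2.2 : ℝ)| := by
  exact_mod_cast Int.one_le_abs hk

lemma one_le_knorm (hk : k.2.2 ≠ 0) : 1 ≤ knorm k :=
  (one_le_abs_snd_snd hk).trans (abs_snd_snd_le_knorm k)

lemma knorm_mul_abs_snd_snd_mul_abs_le_Dnu (k : ℤ × ℤ × ℤ) :
    knorm k * |(k.2.2 : ℝ)| * |(k.2.1 : ℝ) ^ 2 + ν * knorm k ^ 4| ≤ Dnu ν k := by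
  have h := two_mul_le_add_sq (knorm k * |(k.2.2 : ℝ)|) |(k.2.1 : ℝ) ^ 2 + ν * knorm k ^ 4|
  have hnn : 0 ≤ knorm k * |(k.2.2 : ℝ)| * |(k.2.1 : ℝ) ^ 2 + ν * knorm k ^ 4| := by
    have := knorm_nonneg k; positivity
  rw [mul_pow, sq_abs, sq_abs] at h
  unfold Dnu
  linarith

lemma abs_snd_snd_mul_le_Dnu (hk : k.2.2 ≠ 0) :
    |(k.2.2 : ℝ) * ((k.2.1 : ℝ) ^ 2 + ν * knorm k ^ 4)| ≤ Dnu ν k := by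
  have h := knorm_mul_abs_snd_snd_mul_abs_le_Dnu ν k
  rw [abs_mul]
  calc |(k.2.2 : ℝ)| * |(k.2.1 : ℝ) ^ 2 + ν * knorm k ^ 4|
      ≤ knorm k * (|(k.2.2 : ℝ)| * |(k.2.1 : ℝ) ^ 2 + ν * knorm k ^ 4|) :=
        le_mul_of_one_le_left (by positivity) (one_le_knorm hk)
    _ ≤ Dnu ν k := by rwa [← mul_assoc]

lemma abs_snd_snd_mul_knorm_sq_le_Dnu (hk : k.2.2 ≠ 0) :
    |(k.2.2 : ℝ) * knorm k ^ 2| ≤ Dnu ν k := by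
  have h := one_le_abs_snd_snd hk
  have hsq : |(k.2.2 : ℝ)| ≤ (k.2.2 : ℝ) ^ 2 := by rw [← sq_abs]; nlinarith
  rw [abs_mul, abs_of_nonneg (sq_nonneg (knorm k))]
  unfold Dnu
  nlinarith [sq_nonneg (knorm k), sq_nonneg ((k.2.1 : ℝ) ^ 2 + ν * knorm k ^ 4)]

lemma Dnu_pos (hk : k.2.2 ≠ 0) : 0 < Dnu ν k := by
  have h := abs_snd_snd_mul_knorm_sq_le_Dnu ν hk
  rw [abs_mul, abs_of_nonneg (sq_nonneg (knorm k))] at h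
  nlinarith [one_le_abs_snd_snd hk, one_le_knorm hk]

lemma abs_Mhat1_le (hk : k.2.2 ≠ 0) : |Mhat1 ν k| ≤ 2 * knorm k := by
  refine abs_div_le_of_abs_le_mul (Dnu_pos ν hk) ?_
  have h := abs_mul_sub_mul_le (abs_snd_fst_le_knorm k) (abs_fst_le_knorm k)
    (abs_snd_snd_mul_knorm_sq_le_Dnu ν hk) (abs_snd_snd_mul_le_Dnu ν hk)
  convert h using 2; ring

lemma abs_Mhat2_le (hk : k.2.2 ≠ 0) : |Mhat2 ν k| ≤ 2 * knorm k := by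
  refine abs_div_le_of_abs_le_mul (Dnu_pos ν hk) ?_
  have h := abs_mul_sub_mul_le ((abs_neg _).trans_le (abs_fst_le_knorm k)) (abs_snd_fst_le_knorm k)
    (abs_snd_snd_mul_knorm_sq_le_Dnu ν hk) (abs_snd_snd_mul_le_Dnu ν hk)
  convert h using 2; ring

lemma abs_Mhat3_le (hk : k.2.2 ≠ 0) : |Mhat3 ν k| ≤ 2 * knorm k := by
  refine abs_div_le_of_abs_le_mul (Dnu_pos ν hk) ?_
  have hk0 := knorm_nonneg k
  have hxy : (k.1 : ℝ) ^ 2 + (k.2.1 : ℝ) ^ 2 ≤ knorm k ^ 2 := by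
    rw [knorm_sq]; nlinarith [sq_nonneg (k.2.2 : ℝ)]
  rw [abs_mul, abs_of_nonneg (by positivity : (0 : ℝ) ≤ (k.1 : ℝ) ^ 2 + (k.2.1 : ℝ) ^ 2)]
  calc ((k.1 : ℝ) ^ 2 + (k.2.1 : ℝ) ^ 2) * |(k.2.1 : ℝ) ^ 2 + ν * knorm k ^ 4|
      ≤ knorm k * (knorm k * 1 * |(k.2.1 : ℝ) ^ 2 + ν * knorm k ^ 4|) := by
        rw [mul_one, ← mul_assoc, ← sq]; gcongr
    _ ≤ knorm k * (knorm k * |(k.2.2 : ℝ)| * |(k.2.1 : ℝ) ^ 2 + ν * knorm k ^ 4|) := by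
        gcongr; exact one_le_abs_snd_snd hk
    _ ≤ knorm k * Dnu ν k := by gcongr; exact knorm_mul_abs_snd_snd_mul_abs_le_Dnu ν k
    _ ≤ 2 * knorm k * Dnu ν k := by linarith [mul_nonneg hk0 (Dnu_pos ν hk).le]

lemma continuous_div_Dnu {N : ℝ → ℝ} (hN : Continuous N) (hk : k.2.2 ≠ 0) :
    Continuous fun ν => N ν / Dnu ν k :=
  hN.div (by unfold Dnu; fun_prop) fun ν => (Dnu_pos ν hk).ne'

lemma continuous_Mhat1 (hk : k.2.2 ≠ 0) : Continuous fun ν => Mhat1 ν k :=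
  continuous_div_Dnu (by fun_prop) hk

lemma continuous_Mhat2 (hk : k.2.2 ≠ 0) : Continuous fun ν => Mhat2 ν k :=
  continuous_div_Dnu (by fun_prop) hk

lemma continuous_Mhat3 (hk : k.2.2 ≠ 0) : Continuous fun ν => Mhat3 ν k :=
  continuous_div_Dnu (by fun_prop) hk

noncomputable def symbolGap (ν : ℝ) (k : ℤ × ℤ × ℤ) : ℝ :=
  (Mhat1 ν k - Mhat1 0 k) ^ 2 + (Mhat2 ν k - Mhat2 0 k) ^ 2 + (Mhat3 ν k - Mhat3 0 k) ^ 2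

lemma symbolGap_nonneg (k : ℤ × ℤ × ℤ) : 0 ≤ symbolGap ν k := by
  unfold symbolGap; positivity

lemma symbolGap_le (hk : k.2.2 ≠ 0) : symbolGap ν k ≤ 48 * knorm k ^ 2 := by
  have h1 := sq_sub_le_of_abs_le (abs_Mhat1_le ν hk) (abs_Mhat1_le 0 hk)
  have h2 := sq_sub_le_of_abs_le (abs_Mhat2_le ν hk) (abs_Mhat2_le 0 hk)
  have h3 := sq_sub_le_of_abs_le (abs_Mhat3_le ν hk) (abs_Mhat3_le 0 hk)
  unfold symbolGap
  linarith

lemma tendsto_symbolGap (hk : k.2.2 ≠ 0) :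
    Tendsto (fun ν => symbolGap ν k) (𝓝 0) (𝓝 0) := by
  have h : Continuous fun ν => symbolGap ν k := by
    unfold symbolGap
    have := continuous_Mhat1 hk
    have := continuous_Mhat2 hk
    have := continuous_Mhat3 hk
    fun_prop
  simpa [symbolGap] using h.tendsto 0

lemma symbolGap_mul_div_sq_knorm_le (hk : k.2.2 ≠ 0) {t : ℝ} (ht : 0 ≤ t) :
    symbolGap ν k * t / knorm k ^ 2 ≤ 48 * t := by
  have hk0 : 0 < knorm k ^ 2 := by have := one_le_knorm hk; positivity
  rw [div_le_iff₀ hk0]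
  nlinarith [symbolGap_le ν hk]

end Magnetogeostrophic

open Magnetogeostrophic

theorem stmt11 (a : ℤ × ℤ × ℤ → ℂ)
    (ha : Summable fun k : ℤ × ℤ × ℤ => ‖a k‖ ^ 2)
    (ha0 : ∀ k : ℤ × ℤ × ℤ, k.2.2 = 0 → a k = 0) :
    Filter.Tendsto
      (fun ν : ℝ => ∑' (k : {k : ℤ × ℤ × ℤ // k ≠ 0}),
        ((Mhat1 ν k.1 - Mhat1 0 k.1) ^ 2 + (Mhat2 ν k.1 - Mhat2 0 k.1) ^ 2
          + (Mhat3 ν k.1 - Mhat3 0 k.1) ^ 2) * ‖a k.1‖ ^ 2 / (knorm k.1) ^ 2)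
      (nhdsWithin 0 (Set.Ioi 0)) (nhds 0) := by
  let F : ℝ → {k : ℤ × ℤ × ℤ // k ≠ 0} → ℝ := fun ν k =>
    symbolGap ν k.1 * ‖a k.1‖ ^ 2 / knorm k.1 ^ 2
  have hlim : ∀ k, Tendsto (F · k) (𝓝 0) (𝓝 0) := by
    rintro ⟨k, -⟩
    by_cases hk : k.2.2 = 0
    · simp [F, ha0 k hk]
    · simpa using ((tendsto_symbolGap hk).mul_const (‖a k‖ ^ 2)).div_const (knorm k ^ 2)
  have hbound : ∀ ν k, ‖F ν k‖ ≤ 48 * ‖a k.1‖ ^ 2 := by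
    rintro ν ⟨k, -⟩
    rw [Real.norm_of_nonneg (by have := symbolGap_nonneg ν k; positivity)]
    by_cases hk : k.2.2 = 0
    · simp [F, ha0 k hk]
    · exact symbolGap_mul_div_sq_knorm_le ν hk (sq_nonneg _)
  have hF := tendsto_tsum_of_dominated_convergence ((ha.subtype _).mul_left 48) hlim
    (Eventually.of_forall hbound)
  rw [tsum_zero] at hF
  exact hF.mono_left nhdsWithin_le_nhds
end
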